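/- arXiv:1401.5602 — 4 statements merged into one kernel-verified Lean document; each statement's English description precedes it below -/
import Mathlib

section
/- For all integers i, j, k with 0 ≤ i < j < k ≤ n and every X ⊆ C_i, the composition of upward erosions collapses: ε⁺_{j,k}(ε⁺_{i,j}(X)) = ε⁺_{i,k}(X). -/
variable {V : Type*}

/-- `C` is a simplicial complex: every member is a nonempty finite set, and every
nonempty subset of a member of `C` also belongs to `C`. -/
def IsComplex (C : Set (Finset V)) : Prop :=
  (∀ x ∈ C, x.Nonempty) ∧ ∀ x ∈ C, ∀ y : Finset V, y ⊆ x → y.Nonempty → y ∈ C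

/-- The set `C_p` of `p`-simplices of `C` (the dimension of a simplex `x` is `x.card - 1`). -/
def simplices (C : Set (Finset V)) (p : ℕ) : Set (Finset V) :=
  {x | x ∈ C ∧ x.card - 1 = p}

/-- `δ⁺_{i,j}(X)`: the `j`-simplices of `C` that include an `i`-simplex of `X`. -/
def dilPlus (C : Set (Finset V)) (i j : ℕ) (X : Set (Finset V)) : Set (Finset V) :=
  {x | x ∈ simplices C j ∧ ∃ y ∈ X, y ⊆ x}

/-- `ε⁺_{i,j}(X)`: the `j`-simplices of `C` all of whose `i`-dimensional subsets are in `X`. -/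
def eroPlus (C : Set (Finset V)) (i j : ℕ) (X : Set (Finset V)) : Set (Finset V) :=
  {x | x ∈ simplices C j ∧ ∀ y ∈ simplices C i, y ⊆ x → y ∈ X}

/-- `δ⁻_{j,i}(Y)`: the `i`-simplices of `C` included in some `j`-simplex of `Y`. -/
def dilMinus (C : Set (Finset V)) (j i : ℕ) (Y : Set (Finset V)) : Set (Finset V) :=
  {x | x ∈ simplices C i ∧ ∃ y ∈ Y, x ⊆ y}

/-- `ε⁻_{j,i}(Y)`: the `i`-simplices of `C` all of whose `j`-dimensional supersets in `C` are in `Y`. -/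
def eroMinus (C : Set (Finset V)) (j i : ℕ) (Y : Set (Finset V)) : Set (Finset V) :=
  {x | x ∈ simplices C i ∧ ∀ y ∈ simplices C j, x ⊆ y → y ∈ Y}

/-- The star `St(X)` of `X ⊆ C`. -/
def starOp (C : Set (Finset V)) (X : Set (Finset V)) : Set (Finset V) :=
  {y | y ∈ C ∧ ∃ x ∈ X, x ⊆ y}

/-- The closure `Cl(X)`. -/
def closOp (X : Set (Finset V)) : Set (Finset V) :=
  {y : Finset V | y.Nonempty ∧ ∃ x ∈ X, y ⊆ x}

theorem stmt9 (C : Set (Finset V)) (n : ℕ) (hfin : C.Finite) (hne : C.Nonempty)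
    (hC : IsComplex C) (hn : 2 ≤ n)
    (hub : ∀ x ∈ C, x.card - 1 ≤ n) (htop : ∃ x ∈ C, x.card - 1 = n)
    (i j k : ℕ) (hij : i < j) (hjk : j < k) (hkn : k ≤ n)
    (X : Set (Finset V)) (hX : X ⊆ simplices C i) :
    eroPlus C j k (eroPlus C i j X) = eroPlus C i k X := by
  ext x
  constructor
  · rintro ⟨hxk, hj⟩
    obtain ⟨hxC, hxcard⟩ := hxk
    refine ⟨⟨hxC, hxcard⟩, fun y hy hyx => ?_⟩
    obtain ⟨hyC, hyi⟩ := hy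
    have hyne := hC.1 y hyC
    have hxne := hC.1 x hxC
    have hycard : y.card = i + 1 := by
      have := Finset.card_pos.2 hyne; omega
    have hxcard' : x.card = k + 1 := by
      have := Finset.card_pos.2 hxne; omega
    obtain ⟨z, hyz, hzx, hzcard⟩ :=
      Finset.exists_subsuperset_card_eq hyx (by omega : y.card ≤ j + 1)
        (by omega : j + 1 ≤ x.card)
    have hzC : z ∈ C := hC.2 x hxC z hzx (Finset.card_pos.1 (by omega))
    have hz : z ∈ eroPlus C i j X := hj z ⟨hzC, by omega⟩ hzx
    exact hz.2 y ⟨hyC, hyi⟩ hyz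
  · rintro ⟨hxk, hi⟩
    exact ⟨hxk, fun z hz hzx => ⟨hz, fun y hy hyz => hi y hy (hyz.trans hzx)⟩⟩
end

section
/- For all integers i, j, k with 0 ≤ i < j < k ≤ n and every X ⊆ C_k, the composition of downward erosions collapses: ε⁻_{j,i}(ε⁻_{k,j}(X)) = ε⁻_{k,i}(X). -/
variable {V : Type*}

lemma card_eq_of_mem_simplices {C : Set (Finset V)} {p : ℕ} {x : Finset V}
    (hx : x ∈ simplices C p) (hx₀ : x.Nonempty) : x.card = p + 1 := by
  have := hx.2
  have := hx₀.card_pos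
  omega

lemma IsComplex.exists_mem_simplices_between {C : Set (Finset V)} (hC : IsComplex C)
    {i j k : ℕ} (hij : i ≤ j) (hjk : j ≤ k) {x y : Finset V}
    (hx : x ∈ simplices C i) (hy : y ∈ simplices C k) (hxy : x ⊆ y) :
    ∃ z ∈ simplices C j, x ⊆ z ∧ z ⊆ y := by
  have hxc := card_eq_of_mem_simplices hx (hC.1 x hx.1)
  have hyc := card_eq_of_mem_simplices hy (hC.1 y hy.1)
  obtain ⟨z, hxz, hzy, hzc⟩ :=
    Finset.exists_subsuperset_card_eq (n := j + 1) hxy (by omega) (by omega)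
  have hzC : z ∈ C := hC.2 y hy.1 z hzy (Finset.card_pos.mp (by omega))
  exact ⟨z, ⟨hzC, by omega⟩, hxz, hzy⟩

lemma eroMinus_subset_eroMinus_eroMinus (C : Set (Finset V)) (i j k : ℕ) (X : Set (Finset V)) :
    eroMinus C k i X ⊆ eroMinus C j i (eroMinus C k j X) :=
  fun _ ⟨hx, hX⟩ ↦ ⟨hx, fun _ hz hxz ↦ ⟨hz, fun y hy hzy ↦ hX y hy (hxz.trans hzy)⟩⟩

lemma IsComplex.eroMinus_eroMinus_subset {C : Set (Finset V)} (hC : IsComplex C)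
    {i j k : ℕ} (hij : i ≤ j) (hjk : j ≤ k) (X : Set (Finset V)) :
    eroMinus C j i (eroMinus C k j X) ⊆ eroMinus C k i X := by
  rintro x ⟨hx, hX⟩
  refine ⟨hx, fun y hy hxy ↦ ?_⟩
  obtain ⟨z, hz, hxz, hzy⟩ := hC.exists_mem_simplices_between hij hjk hx hy hxy
  exact (hX z hz hxz).2 y hy hzy

theorem stmt11_general (C : Set (Finset V))
    (hC : IsComplex C)
    (i j k : ℕ) (hij : i < j) (hjk : j < k)
    (X : Set (Finset V)) :
    eroMinus C j i (eroMinus C k j X) = eroMinus C k i X :=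
  (hC.eroMinus_eroMinus_subset hij.le hjk.le X).antisymm
    (eroMinus_subset_eroMinus_eroMinus C i j k X)

theorem stmt11 (C : Set (Finset V)) (n : ℕ) (hfin : C.Finite) (hne : C.Nonempty)
    (hC : IsComplex C) (hn : 2 ≤ n)
    (hub : ∀ x ∈ C, x.card - 1 ≤ n) (htop : ∃ x ∈ C, x.card - 1 = n)
    (i j k : ℕ) (hij : i < j) (hjk : j < k) (hkn : k ≤ n)
    (X : Set (Finset V)) (hX : X ⊆ simplices C k) :
    eroMinus C j i (eroMinus C k j X) = eroMinus C k i X :=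
  stmt11_general C hC i j k hij hjk X
end

section
/- Let 0 ≤ i < j ≤ n, let M_j : C_j → K, and let x ∈ C_i be such that at least one j-simplex of C contains x. Then the value of the extended stack operator of δ⁻_{j,i} at x is the maximum of M_j over the j-simplices containing x: max{k ∈ K : x ∈ δ⁻_{j,i}(M_j[k])} = max{M_j(y) : y ∈ C_j, x ⊆ y}, where M_j[k] = {y ∈ C_j : M_j(y) ≥ k}. -/
variable {V : Type*}

theorem stmt17 (C : Set (Finset V)) (n : ℕ) (hfin : C.Finite) (hne : C.Nonempty)
    (hC : IsComplex C) (hn : 1 ≤ n)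
    (hub : ∀ x ∈ C, x.card - 1 ≤ n) (htop : ∃ x ∈ C, x.card - 1 = n)
    (kmin kmax : ℕ) (hk : kmin < kmax)
    (i j : ℕ) (hij : i < j) (hjn : j ≤ n)
    (M : Finset V → ℕ) (hM : ∀ y ∈ simplices C j, M y ∈ Set.Icc kmin kmax)
    (x : Finset V) (hx : x ∈ simplices C i)
    (hex : ∃ y ∈ simplices C j, x ⊆ y) :
    sSup {k | k ∈ Set.Icc kmin kmax ∧
        x ∈ dilMinus C j i {y | y ∈ simplices C j ∧ k ≤ M y}} =
      sSup (M '' {y | y ∈ simplices C j ∧ x ⊆ y}) := by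
  set S2 : Set ℕ := M '' {y | y ∈ simplices C j ∧ x ⊆ y} with hS2
  obtain ⟨y0, hy0, hxy0⟩ := hex
  have hS2ne : S2.Nonempty := ⟨M y0, y0, ⟨hy0, hxy0⟩, rfl⟩
  have hS2bdd : BddAbove S2 := ⟨kmax, by
    rintro _ ⟨y, ⟨hy, _⟩, rfl⟩; exact (hM y hy).2⟩
  obtain ⟨y1, ⟨hy1, hxy1⟩, hm⟩ := Nat.sSup_mem hS2ne hS2bdd
  set m := sSup S2 with hmdef
  have hmS1 : m ∈ {k | k ∈ Set.Icc kmin kmax ∧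
      x ∈ dilMinus C j i {y | y ∈ simplices C j ∧ k ≤ M y}} := by
    refine ⟨?_, hx, y1, ⟨hy1, le_of_eq hm.symm⟩, hxy1⟩
    rw [← hm]; exact hM y1 hy1
  apply le_antisymm
  · apply csSup_le ⟨m, hmS1⟩
    rintro k ⟨hkK, _, y, ⟨hy, hky⟩, hxy⟩
    exact hky.trans (le_csSup hS2bdd ⟨y, ⟨hy, hxy⟩, rfl⟩)
  · exact le_csSup ⟨kmax, fun k hk => hk.1.2⟩ hmS1
end

section
/- Let 0 ≤ i < j ≤ n, let M_i : C_i → K, and let x ∈ C_j. Then the value of the extended stack operator of δ⁺_{i,j} at x is the maximum of M_i over the i-simplices contained in x: max{k ∈ K : x ∈ δ⁺_{i,j}(M_i[k])} = max{M_i(y) : y ∈ C_i, y ⊆ x}, where M_i[k] = {y ∈ C_i : M_i(y) ≥ k}. (The set {y ∈ C_i : y ⊆ x} is nonempty since C is a complex and i < j.) -/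
variable {V : Type*}

theorem stmt18 (C : Set (Finset V)) (n : ℕ) (hfin : C.Finite) (hne : C.Nonempty)
    (hC : IsComplex C) (hn : 1 ≤ n)
    (hub : ∀ x ∈ C, x.card - 1 ≤ n) (htop : ∃ x ∈ C, x.card - 1 = n)
    (kmin kmax : ℕ) (hk : kmin < kmax)
    (i j : ℕ) (hij : i < j) (hjn : j ≤ n)
    (M : Finset V → ℕ) (hM : ∀ y ∈ simplices C i, M y ∈ Set.Icc kmin kmax)
    (x : Finset V) (hx : x ∈ simplices C j) :
    sSup {k | k ∈ Set.Icc kmin kmax ∧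
        x ∈ dilPlus C i j {y | y ∈ simplices C i ∧ k ≤ M y}} =
      sSup (M '' {y | y ∈ simplices C i ∧ y ⊆ x}) := by
  set Y : Set (Finset V) := {y | y ∈ simplices C i ∧ y ⊆ x} with hY
  set T : Set ℕ := M '' Y with hT
  set S : Set ℕ := {k | k ∈ Set.Icc kmin kmax ∧
      x ∈ dilPlus C i j {y | y ∈ simplices C i ∧ k ≤ M y}} with hS
  obtain ⟨hxC, hxcard⟩ := hx
  -- Y is nonempty
  have hxcard' : i + 1 ≤ x.card := by
    have hne' : x.Nonempty := hC.1 x hxC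
    have h1 : 1 ≤ x.card := Finset.card_pos.mpr hne'
    omega
  have hYne : Y.Nonempty := by
    obtain ⟨y, hyx, hycard⟩ := Finset.exists_subset_card_eq hxcard'
    refine ⟨y, ⟨⟨hC.2 x hxC y hyx ?_, by omega⟩, hyx⟩⟩
    exact Finset.card_pos.mp (by omega)
  -- T is nonempty and bounded
  have hTne : T.Nonempty := hYne.image M
  have hTbdd : BddAbove T := by
    refine ⟨kmax, fun k hk' => ?_⟩
    obtain ⟨y, hy, rfl⟩ := hk'
    exact (hM y hy.1).2
  -- sSup T is attained
  obtain ⟨y₀, hy₀, hy₀eq⟩ := Nat.sSup_mem hTne hTbdd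
  have hSbdd : BddAbove S := ⟨kmax, fun k hk' => hk'.1.2⟩
  have hSne : S.Nonempty := by
    refine ⟨M y₀, ⟨(hM y₀ hy₀.1).1, (hM y₀ hy₀.1).2⟩, ⟨⟨hxC, hxcard⟩, y₀, ⟨hy₀.1, le_refl _⟩, hy₀.2⟩⟩
  apply le_antisymm
  · apply csSup_le hSne
    intro k hk'
    obtain ⟨_, _, y, ⟨hyi, hky⟩, hyx⟩ := hk'
    calc k ≤ M y := hky
      _ ≤ sSup T := le_csSup hTbdd ⟨y, ⟨hyi, hyx⟩, rfl⟩
  · rw [← hy₀eq]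
    exact le_csSup hSbdd ⟨⟨(hM y₀ hy₀.1).1, (hM y₀ hy₀.1).2⟩,
      ⟨⟨hxC, hxcard⟩, y₀, ⟨hy₀.1, le_refl _⟩, hy₀.2⟩⟩
end
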